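/- arXiv:1904.11134 — 2 statements merged into one kernel-verified Lean document; each statement's English description precedes it below -/
import Mathlib

section
/- (Theorem 4.4, likelihood is maximized exactly at the consistent frequencies.) Fix a collection of itemsets C = {X_1,…,X_k} and a dataset D, and let Φ̂ = (fr(X_1|D),…,fr(X_k|D)). Let Φ = (f_1,…,f_k) ∈ [0,1]^k be any frequency vector such that a maximum-entropy distribution p*_{⟨C,Φ⟩} exists, and let p*_{⟨C,Φ̂⟩} be a maximum-entropy distribution for ⟨C,Φ̂⟩. Then p*_{⟨C,Φ⟩}(D) ≤ p*_{⟨C,Φ̂⟩}(D), and equality holds if and only if Φ = Φ̂. -/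
/-!
Let `q_D` be the empirical distribution of `D`; it has the frequencies `Φ̂`, and
`log p(D) = |D| ∑ q_D log p` whenever `p` does not vanish on `D` (otherwise `p(D) = 0`).

A maximum-entropy distribution `p` for `⟨C, Φ⟩` satisfies two first-order conditions. Since
`-x log x` has infinite slope at `0`, moving a little towards any `q ∈ P_{C,Φ}` would raise the
entropy if `q` charged a transaction that `p` does not: so every such `q` lives on the support of
`p`. And `log p` is orthogonal to every direction `q - r` between two distributions on the
support of `p` with the same itemset frequencies. Applied to `q_D` and `p̂` this gives
`∑ q_D log p = ∑ p̂ log p ≤ ∑ p̂ log p̂ = ∑ q_D log p̂` by Gibbs' inequality, with equality only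
if `p = p̂`. The same two facts make the maximum-entropy distribution unique, which gives the
converse.
-/

open scoped BigOperators

/-- A transaction over `N` items: an element of `{0,1}^N`. -/
abbrev Transaction (N : ℕ) := Fin N → Bool

/-- A transaction `t` supports an itemset `X` iff `t i = 1` for all `i ∈ X`. -/
def supports {N : ℕ} (X : Finset (Fin N)) (t : Transaction N) : Prop :=
  ∀ i ∈ X, t i = true

instance {N : ℕ} (X : Finset (Fin N)) (t : Transaction N) : Decidable (supports X t) :=
  inferInstanceAs (Decidable (∀ i ∈ X, t i = true))

/-- A distribution on `{0,1}^N`: values in `[0,1]` summing to one. -/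
def IsDistr {N : ℕ} (p : Transaction N → ℝ) : Prop :=
  (∀ t, 0 ≤ p t ∧ p t ≤ 1) ∧ ∑ t, p t = 1

/-- `p(X = 1)`: the probability that a transaction supports `X`. -/
def probOne {N : ℕ} (p : Transaction N → ℝ) (X : Finset (Fin N)) : ℝ :=
  ∑ t, if supports X t then p t else 0

/-- Binary entropy `H(p) = -∑ p(t) log₂ p(t)` (with `0·log₂ 0 = 0`, as `Real.logb 2 0 = 0`). -/
noncomputable def entropy {N : ℕ} (p : Transaction N → ℝ) : ℝ :=
  - ∑ t, p t * Real.logb 2 (p t)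

/-- Frequency of an itemset in a dataset (a multiset of transactions). -/
noncomputable def freq {N : ℕ} (X : Finset (Fin N)) (D : Multiset (Transaction N)) : ℝ :=
  (D.countP (fun t => supports X t) : ℝ) / (Multiset.card D : ℝ)

/-- Likelihood of a dataset: `p(D) = ∏_{t ∈ D} p(t)`. -/
noncomputable def lhd {N : ℕ} (p : Transaction N → ℝ) (D : Multiset (Transaction N)) : ℝ :=
  (D.map p).prod

open Real InformationTheory Filter Topology Finset

section Gibbs

variable {ι : Type*} [Fintype ι] {p q : ι → ℝ}

lemma sum_mul_log_sub_sum_mul_log_eq_sum_mul_klFun (hqp : ∀ t, p t = 0 → q t = 0)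
    (hsum : ∑ t, q t = ∑ t, p t) :
    ∑ t, q t * log (q t) - ∑ t, q t * log (p t) = ∑ t, p t * klFun (q t / p t) := by
  have hterm : ∀ t, q t * log (q t) - q t * log (p t) = p t * klFun (q t / p t) - p t + q t := by
    intro t
    by_cases hp0 : p t = 0
    · simp [hp0, hqp t hp0]
    by_cases hq0 : q t = 0
    · simp [hq0, klFun_zero]
    rw [klFun_apply, log_div hq0 hp0]
    field_simp
    ring
  rw [← sum_sub_distrib]
  simp only [hterm]
  rw [sum_add_distrib, sum_sub_distrib, hsum]
  ring

lemma sum_mul_log_le_sum_mul_log (hp : ∀ t, 0 ≤ p t) (hq : ∀ t, 0 ≤ q t)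
    (hqp : ∀ t, p t = 0 → q t = 0) (hsum : ∑ t, q t = ∑ t, p t) :
    ∑ t, q t * log (p t) ≤ ∑ t, q t * log (q t) := by
  have := sum_mul_log_sub_sum_mul_log_eq_sum_mul_klFun hqp hsum
  have : 0 ≤ ∑ t, p t * klFun (q t / p t) :=
    sum_nonneg fun t _ => mul_nonneg (hp t) (klFun_nonneg (div_nonneg (hq t) (hp t)))
  linarith

lemma eq_of_sum_mul_log_eq_sum_mul_log (hp : ∀ t, 0 ≤ p t) (hq : ∀ t, 0 ≤ q t)
    (hqp : ∀ t, p t = 0 → q t = 0) (hsum : ∑ t, q t = ∑ t, p t)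
    (h : ∑ t, q t * log (p t) = ∑ t, q t * log (q t)) : p = q := by
  have hzero : ∑ t, p t * klFun (q t / p t) = 0 := by
    rw [← sum_mul_log_sub_sum_mul_log_eq_sum_mul_klFun hqp hsum, h, sub_self]
  rw [sum_eq_zero_iff_of_nonneg fun t _ =>
    mul_nonneg (hp t) (klFun_nonneg (div_nonneg (hq t) (hp t)))] at hzero
  funext t
  by_cases hp0 : p t = 0
  · rw [hp0, hqp t hp0]
  have hk := (mul_eq_zero.1 (hzero t (mem_univ t))).resolve_left hp0
  rw [klFun_eq_zero_iff (div_nonneg (hq t) (hp t)), div_eq_one_iff_eq hp0] at hk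
  exact hk.symm

end Gibbs

lemma eventually_forall_pos_add_mul {ι : Type*} [Fintype ι] (p d : ι → ℝ) :
    ∀ᶠ ε in 𝓝 (0 : ℝ), ∀ t, 0 < p t → 0 < p t + ε * d t := by
  refine eventually_all.2 fun t => ?_
  by_cases ht : 0 < p t
  · have hcont : Continuous fun ε : ℝ => p t + ε * d t := by fun_prop
    exact ((hcont.tendsto' 0 (p t) (by simp)).eventually_const_lt ht).mono fun _ h _ => h
  · exact .of_forall fun _ h => absurd h ht

section Empirical

variable {α : Type*} [DecidableEq α]

noncomputable def empirical (D : Multiset α) (t : α) : ℝ :=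
  D.count t / Multiset.card D

lemma empirical_nonneg (D : Multiset α) (t : α) : 0 ≤ empirical D t :=
  div_nonneg (Nat.cast_nonneg _) (Nat.cast_nonneg _)

lemma empirical_eq_zero_iff {D : Multiset α} {t : α} : empirical D t = 0 ↔ t ∉ D := by
  simp only [empirical, div_eq_zero_iff, Nat.cast_eq_zero, Multiset.count_eq_zero,
    Multiset.card_eq_zero, or_iff_left_iff_imp]
  rintro rfl
  exact Multiset.notMem_zero t

variable [Fintype α]

lemma sum_count_mul_eq_sum_map (D : Multiset α) (g : α → ℝ) :
    ∑ t, D.count t * g t = (D.map g).sum := by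
  rw [sum_multiset_map_count]
  refine (sum_subset (subset_univ _) fun t _ ht => ?_).symm.trans (sum_congr rfl fun _ _ => ?_)
  · rw [Multiset.mem_toFinset, ← Multiset.count_eq_zero] at ht
    simp [ht]
  · rw [nsmul_eq_mul]

lemma sum_empirical {D : Multiset α} (hD : D ≠ 0) : ∑ t, empirical D t = 1 := by
  have hcard : (Multiset.card D : ℝ) ≠ 0 := by simpa using hD
  simp only [empirical, ← sum_div]
  rw [div_eq_one_iff_eq hcard]
  exact_mod_cast Multiset.sum_count_eq_card fun t _ => mem_univ t

lemma prod_map_eq_exp_card_mul_sum_empirical_mul_log {D : Multiset α} (hD : D ≠ 0)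
    {r : α → ℝ} (hr : ∀ t ∈ D, 0 < r t) :
    (D.map r).prod = exp (Multiset.card D * ∑ t, empirical D t * log (r t)) := by
  have hcard : (Multiset.card D : ℝ) ≠ 0 := by simpa using hD
  have hlog : Multiset.card D * ∑ t, empirical D t * log (r t) = (D.map (log ∘ r)).sum := by
    rw [← sum_count_mul_eq_sum_map, mul_sum]
    refine sum_congr rfl fun t _ => ?_
    simp only [empirical, Function.comp]
    field_simp
  rw [hlog, exp_multiset_sum, Multiset.map_map]
  exact congrArg Multiset.prod (Multiset.map_congr rfl fun t ht => (exp_log (hr t ht)).symm)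

end Empirical

section MaxEnt

variable {N k : ℕ} (X : Fin k → Finset (Fin N))

lemma isDistr_of_nonneg {p : Transaction N → ℝ} (hp : ∀ t, 0 ≤ p t) (hsum : ∑ t, p t = 1) :
    IsDistr p :=
  ⟨fun t => ⟨hp t, hsum ▸ single_le_sum (fun s _ => hp s) (mem_univ t)⟩, hsum⟩

lemma probOne_eq_sum_filter (p : Transaction N → ℝ) (Y : Finset (Fin N)) :
    probOne p Y = ∑ t ∈ univ.filter (supports Y), p t :=
  (sum_filter _ _).symm

lemma probOne_empirical (Y : Finset (Fin N)) (D : Multiset (Transaction N)) :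
    probOne (empirical D) Y = freq Y D := by
  rw [probOne_eq_sum_filter, freq, Multiset.countP_eq_card_filter]
  simp only [empirical, ← sum_div]
  congr 1
  rw [← Multiset.sum_count_eq_card (s := univ) fun t _ => mem_univ t]
  simp only [Multiset.count_filter, sum_filter, Nat.cast_sum, Nat.cast_ite, Nat.cast_zero]

lemma entropy_eq_sum_negMulLog_div (p : Transaction N → ℝ) :
    entropy p = (∑ t, negMulLog (p t)) / log 2 := by
  simp only [entropy, negMulLog, logb, sum_div, ← sum_neg_distrib]
  exact sum_congr rfl fun t _ => by ring

def consistentDistrs (f : Fin k → ℝ) : Set (Transaction N → ℝ) :=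
  {q | IsDistr q ∧ ∀ i, probOne q (X i) = f i}

def IsMaxEnt (f : Fin k → ℝ) (p : Transaction N → ℝ) : Prop :=
  p ∈ consistentDistrs X f ∧ ∀ q ∈ consistentDistrs X f, entropy q ≤ entropy p

variable {X} {f : Fin k → ℝ} {p q r : Transaction N → ℝ}

lemma add_mul_sub_mem_consistentDistrs (hp : p ∈ consistentDistrs X f) {ε : ℝ}
    (hsum : ∑ t, q t = ∑ t, r t) (hC : ∀ i, probOne q (X i) = probOne r (X i))
    (hnn : ∀ t, 0 ≤ p t + ε * (q t - r t)) :
    (fun t => p t + ε * (q t - r t)) ∈ consistentDistrs X f := by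
  have hlin : ∀ s : Finset (Transaction N), ∑ t ∈ s, (p t + ε * (q t - r t)) =
      ∑ t ∈ s, p t + ε * (∑ t ∈ s, q t - ∑ t ∈ s, r t) := fun s => by
    rw [sum_add_distrib, ← mul_sum, sum_sub_distrib]
  refine ⟨isDistr_of_nonneg hnn ?_, fun i => ?_⟩
  · rw [hlin, hsum, sub_self, mul_zero, add_zero, hp.1.2]
  · have hCi := hC i
    rw [probOne_eq_sum_filter, probOne_eq_sum_filter] at hCi
    rw [probOne_eq_sum_filter, hlin, hCi, sub_self, mul_zero, add_zero, ← probOne_eq_sum_filter,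
      hp.2 i]

lemma IsMaxEnt.sum_negMulLog_le (hp : IsMaxEnt X f p) (hq : q ∈ consistentDistrs X f) :
    ∑ t, negMulLog (q t) ≤ ∑ t, negMulLog (p t) := by
  have := hp.2 q hq
  rwa [entropy_eq_sum_negMulLog_div, entropy_eq_sum_negMulLog_div,
    div_le_div_iff_of_pos_right (log_pos one_lt_two)] at this

lemma IsMaxEnt.eq_zero_of_eq_zero (hp : IsMaxEnt X f p) (hq : q ∈ consistentDistrs X f)
    {t₀ : Transaction N} (ht₀ : p t₀ = 0) : q t₀ = 0 := by
  by_contra hq₀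
  have ha : 0 < q t₀ := (hq.1.1 t₀).1.lt_of_ne' hq₀
  set a := q t₀
  set B := ∑ t, negMulLog (p t)
  -- Mixing in `ε` of `q` costs at most `ε B` of entropy away from `t₀` (concavity) but gains
  -- `negMulLog (ε a)` at `t₀`, which is more as soon as `log (ε a) ≤ -(B + 1) / a`.
  set ε := min 1 (exp (-(B + 1) / a) / a)
  have hε : 0 < ε := lt_min one_pos (by positivity)
  have hε₁ : ε ≤ 1 := min_le_left _ _
  have hmix : (fun t => p t + ε * (q t - p t)) ∈ consistentDistrs X f := by
    refine add_mul_sub_mem_consistentDistrs hp.1 (hq.1.2.trans hp.1.1.2.symm)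
      (fun i => (hq.2 i).trans (hp.1.2 i).symm) fun t => ?_
    have := (hp.1.1.1 t).1
    have := (hq.1.1 t).1
    nlinarith
  have hpoint : ∀ t, (1 - ε) * negMulLog (p t) + (if t = t₀ then negMulLog (ε * a) else 0) ≤
      negMulLog (p t + ε * (q t - p t)) := by
    intro t
    split_ifs with ht
    · subst ht; simp [ht₀, a]
    · have hp0 := (hp.1.1.1 t).1
      have hq0 := hq.1.1 t
      have hconc := concaveOn_negMulLog.2 (Set.mem_Ici.2 hp0) (Set.mem_Ici.2 hq0.1)
        (sub_nonneg.2 hε₁) hε.le (sub_add_cancel 1 ε)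
      simp only [smul_eq_mul] at hconc
      calc (1 - ε) * negMulLog (p t) + 0 ≤ (1 - ε) * negMulLog (p t) + ε * negMulLog (q t) := by
            gcongr
            exact mul_nonneg hε.le (negMulLog_nonneg hq0.1 hq0.2)
        _ ≤ negMulLog ((1 - ε) * p t + ε * q t) := hconc
        _ = negMulLog (p t + ε * (q t - p t)) := by ring_nf
  have hgain : negMulLog (ε * a) ≤ ε * B := by
    have := (sum_le_sum fun t _ => hpoint t).trans (hp.sum_negMulLog_le hmix)
    rw [sum_add_distrib, ← mul_sum, sum_ite_eq' univ t₀, if_pos (mem_univ t₀)] at this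
    linarith
  have hlog : log (ε * a) ≤ -(B + 1) / a := by
    rw [log_le_iff_le_exp (by positivity)]
    calc ε * a ≤ exp (-(B + 1) / a) / a * a := mul_le_mul_of_nonneg_right (min_le_right _ _) ha.le
      _ = _ := div_mul_cancel₀ _ ha.ne'
  have : ε * (B + 1) ≤ negMulLog (ε * a) := by
    rw [negMulLog, neg_mul, ← mul_neg]
    calc ε * (B + 1) = ε * a * ((B + 1) / a) := by field_simp
      _ ≤ ε * a * -log (ε * a) := by
        gcongr
        rw [neg_div] at hlog
        linarith
  linarith

lemma IsMaxEnt.eq_zero_of_eq_zero_of_probOne_eq (hp : IsMaxEnt X f p) (hq : ∀ t, 0 ≤ q t)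
    (hr : ∀ t, p t = 0 → r t = 0) (hsum : ∑ t, q t = ∑ t, r t)
    (hC : ∀ i, probOne q (X i) = probOne r (X i)) {t₀ : Transaction N} (ht₀ : p t₀ = 0) :
    q t₀ = 0 := by
  obtain ⟨ε, hpos, hε : 0 < ε⟩ := (((eventually_forall_pos_add_mul p fun t => q t - r t).filter_mono
    nhdsWithin_le_nhds).and (eventually_mem_nhdsWithin (s := Set.Ioi 0))).exists
  have hnn : ∀ t, 0 ≤ p t + ε * (q t - r t) := fun t => by
    rcases (hp.1.1.1 t).1.lt_or_eq with ht | ht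
    · exact (hpos t ht).le
    · rw [← ht, hr t ht.symm, zero_add, sub_zero]
      exact mul_nonneg hε.le (hq t)
  have := hp.eq_zero_of_eq_zero (add_mul_sub_mem_consistentDistrs hp.1 hsum hC hnn) ht₀
  simpa [ht₀, hr t₀ ht₀, hε.ne'] using this

lemma IsMaxEnt.sum_mul_log_eq_of_probOne_eq (hp : IsMaxEnt X f p)
    (hq : ∀ t, p t = 0 → q t = 0) (hr : ∀ t, p t = 0 → r t = 0) (hsum : ∑ t, q t = ∑ t, r t)
    (hC : ∀ i, probOne q (X i) = probOne r (X i)) :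
    ∑ t, q t * log (p t) = ∑ t, r t * log (p t) := by
  let F : ℝ → ℝ := fun ε => ∑ t, negMulLog (p t + ε * (q t - r t))
  have hmax : IsLocalMax F 0 := by
    filter_upwards [eventually_forall_pos_add_mul p fun t => q t - r t] with ε hε
    have hnn : ∀ t, 0 ≤ p t + ε * (q t - r t) := fun t => by
      rcases (hp.1.1.1 t).1.lt_or_eq with ht | ht
      · exact (hε t ht).le
      · simp [← ht, hq t ht.symm, hr t ht.symm]
    simpa [F] using hp.sum_negMulLog_le (add_mul_sub_mem_consistentDistrs hp.1 hsum hC hnn)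
  have hderiv : HasDerivAt F (∑ t, (q t - r t) * (-log (p t) - 1)) 0 := by
    refine HasDerivAt.fun_sum fun t _ => ?_
    by_cases ht : p t = 0
    · simpa [ht, hq t ht, hr t ht] using hasDerivAt_const (0 : ℝ) (0 : ℝ)
    · have hlin : HasDerivAt (fun ε : ℝ => p t + ε * (q t - r t)) (q t - r t) 0 := by
        simpa using ((hasDerivAt_id (0 : ℝ)).mul_const (q t - r t)).const_add (p t)
      have houter : HasDerivAt negMulLog (-log (p t) - 1) (p t + 0 * (q t - r t)) := by
        simpa using hasDerivAt_negMulLog ht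
      exact (houter.comp 0 hlin).congr_deriv (mul_comm _ _)
  have h0 := hmax.hasDerivAt_eq_zero hderiv
  simp only [mul_sub, sub_mul, mul_neg, mul_one, sum_sub_distrib, sum_neg_distrib] at h0
  linarith

lemma IsMaxEnt.unique (hp : IsMaxEnt X f p) (hq : IsMaxEnt X f q) : p = q := by
  have hqp : ∀ t, p t = 0 → q t = 0 := fun t => hp.eq_zero_of_eq_zero hq.1
  have hcross : ∑ t, q t * log (p t) = ∑ t, p t * log (p t) :=
    hp.sum_mul_log_eq_of_probOne_eq hqp (fun _ h => h) (hq.1.1.2.trans hp.1.1.2.symm)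
      fun i => (hq.1.2 i).trans (hp.1.2 i).symm
  have hent : ∑ t, p t * log (p t) = ∑ t, q t * log (q t) := by
    have := le_antisymm (hp.sum_negMulLog_le hq.1) (hq.sum_negMulLog_le hp.1)
    simpa [negMulLog, sum_neg_distrib] using this.symm
  exact eq_of_sum_mul_log_eq_sum_mul_log (fun t => (hp.1.1.1 t).1) (fun t => (hq.1.1.1 t).1) hqp
    (hq.1.1.2.trans hp.1.1.2.symm) (hcross.trans hent)

lemma IsMaxEnt.sum_mul_log_le {g : Fin k → ℝ} {p' : Transaction N → ℝ} (hp : IsMaxEnt X f p)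
    (hp' : IsMaxEnt X g p') (hq : q ∈ consistentDistrs X g) (hqp : ∀ t, p t = 0 → q t = 0) :
    ∑ t, q t * log (p t) ≤ ∑ t, q t * log (p' t) ∧
      (∑ t, q t * log (p t) = ∑ t, q t * log (p' t) → p = p') := by
  have hsum : ∑ t, p' t = ∑ t, q t := hp'.1.1.2.trans hq.1.2.symm
  have hC : ∀ i, probOne p' (X i) = probOne q (X i) := fun i => (hp'.1.2 i).trans (hq.2 i).symm
  have hp'p : ∀ t, p t = 0 → p' t = 0 := fun t =>
    hp.eq_zero_of_eq_zero_of_probOne_eq (fun t => (hp'.1.1.1 t).1) hqp hsum hC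
  have hcross : ∑ t, q t * log (p t) = ∑ t, p' t * log (p t) :=
    hp.sum_mul_log_eq_of_probOne_eq hqp hp'p hsum.symm fun i => (hC i).symm
  have hcross' : ∑ t, q t * log (p' t) = ∑ t, p' t * log (p' t) :=
    hp'.sum_mul_log_eq_of_probOne_eq (fun t => hp'.eq_zero_of_eq_zero hq) (fun _ h => h)
      hsum.symm fun i => (hC i).symm
  have hnn : ∀ t, 0 ≤ p t := fun t => (hp.1.1.1 t).1
  have hnn' : ∀ t, 0 ≤ p' t := fun t => (hp'.1.1.1 t).1
  have hsum' : ∑ t, p' t = ∑ t, p t := hsum.trans (hq.1.2.trans hp.1.1.2.symm)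
  rw [hcross, hcross']
  exact ⟨sum_mul_log_le_sum_mul_log hnn hnn' hp'p hsum',
    eq_of_sum_mul_log_eq_sum_mul_log hnn hnn' hp'p hsum'⟩

end MaxEnt

theorem maxent_likelihood_maximized_at_consistent_general {N k : ℕ}
    (X : Fin k → Finset (Fin N))
    (D : Multiset (Transaction N)) (hD : D ≠ 0)
    (f : Fin k → ℝ)
    -- `p` is a maximum-entropy distribution for `⟨C, Φ⟩`:
    (p : Transaction N → ℝ) (hp : IsDistr p)
    (hpC : ∀ i, probOne p (X i) = f i)
    (hpMax : ∀ q : Transaction N → ℝ, IsDistr q → (∀ i, probOne q (X i) = f i) →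
      entropy q ≤ entropy p)
    -- `phat` is a maximum-entropy distribution for `⟨C, Φ̂⟩` with `Φ̂ᵢ = fr(Xᵢ|D)`:
    (phat : Transaction N → ℝ) (hphat : IsDistr phat)
    (hphatC : ∀ i, probOne phat (X i) = freq (X i) D)
    (hphatMax : ∀ q : Transaction N → ℝ, IsDistr q →
      (∀ i, probOne q (X i) = freq (X i) D) → entropy q ≤ entropy phat) :
    lhd p D ≤ lhd phat D ∧
      (lhd p D = lhd phat D ↔ f = fun i => freq (X i) D) := by
  have hpM : IsMaxEnt X f p := ⟨⟨hp, hpC⟩, fun q hq => hpMax q hq.1 hq.2⟩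
  have hphatM : IsMaxEnt X (fun i => freq (X i) D) phat :=
    ⟨⟨hphat, hphatC⟩, fun q hq => hphatMax q hq.1 hq.2⟩
  have hemp : empirical D ∈ consistentDistrs X fun i => freq (X i) D :=
    ⟨isDistr_of_nonneg (empirical_nonneg D) (sum_empirical hD), fun i => probOne_empirical _ D⟩
  have hphat_pos : ∀ t ∈ D, 0 < phat t := fun t ht => (hphat.1 t).1.lt_of_ne' fun h =>
    empirical_eq_zero_iff.1 (hphatM.eq_zero_of_eq_zero hemp h) ht
  have hphat_lhd : lhd phat D = _ := prod_map_eq_exp_card_mul_sum_empirical_mul_log hD hphat_pos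
  have hconsistent : (f = fun i => freq (X i) D) → lhd p D = lhd phat D := by
    rintro rfl
    rw [hpM.unique hphatM]
  by_cases hpD : ∀ t ∈ D, 0 < p t
  · obtain ⟨hle, heq⟩ := hpM.sum_mul_log_le hphatM hemp fun t h =>
      empirical_eq_zero_iff.2 fun ht => (hpD t ht).ne' h
    have hcard : (0 : ℝ) < Multiset.card D := by simpa [Multiset.card_pos] using hD
    have hp_lhd : lhd p D = _ := prod_map_eq_exp_card_mul_sum_empirical_mul_log hD hpD
    refine ⟨?_, fun h => funext fun i => ?_, hconsistent⟩
    · rw [hp_lhd, hphat_lhd, exp_le_exp]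
      exact mul_le_mul_of_nonneg_left hle hcard.le
    · rw [hp_lhd, hphat_lhd, exp_eq_exp, mul_right_inj' hcard.ne'] at h
      rw [← hpC, heq h, hphatC]
  · simp only [not_forall, not_lt] at hpD
    obtain ⟨t, ht, hpt⟩ := hpD
    have hzero : lhd p D = 0 :=
      Multiset.prod_eq_zero (Multiset.mem_map.2 ⟨t, ht, le_antisymm hpt (hp.1 t).1⟩)
    have hpos : 0 < lhd phat D := hphat_lhd ▸ exp_pos _
    exact ⟨hzero ▸ hpos.le, fun h => absurd (hzero ▸ h) hpos.ne, hconsistent⟩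

/-- Theorem 4.4: the likelihood of the maximum entropy model is maximized
exactly at the frequencies consistent with the data. -/
theorem maxent_likelihood_maximized_at_consistent {N k : ℕ} (hN : 1 ≤ N)
    (X : Fin k → Finset (Fin N))
    (D : Multiset (Transaction N)) (hD : D ≠ 0)
    (f : Fin k → ℝ) (hf : ∀ i, f i ∈ Set.Icc (0 : ℝ) 1)
    -- `p` is a maximum-entropy distribution for `⟨C, Φ⟩`:
    (p : Transaction N → ℝ) (hp : IsDistr p)
    (hpC : ∀ i, probOne p (X i) = f i)
    (hpMax : ∀ q : Transaction N → ℝ, IsDistr q → (∀ i, probOne q (X i) = f i) →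
      entropy q ≤ entropy p)
    -- `phat` is a maximum-entropy distribution for `⟨C, Φ̂⟩` with `Φ̂ᵢ = fr(Xᵢ|D)`:
    (phat : Transaction N → ℝ) (hphat : IsDistr phat)
    (hphatC : ∀ i, probOne phat (X i) = freq (X i) D)
    (hphatMax : ∀ q : Transaction N → ℝ, IsDistr q →
      (∀ i, probOne q (X i) = freq (X i) D) → entropy q ≤ entropy phat) :
    lhd p D ≤ lhd phat D ∧
      (lhd p D = lhd phat D ↔ f = fun i => freq (X i) D) :=
  maxent_likelihood_maximized_at_consistent_general X D hD f p hp hpC hpMax phat hphat hphatC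
    hphatMax
end

section
/- (Corollary 4.9, derivable itemsets are redundant.) Fix a collection of itemsets C and a dataset D. Let X ∉ C be an itemset that is derivable, meaning: for any two distributions p, q on T with p(W = 1) = q(W = 1) for every proper subset W ⊊ X, also p(X = 1) = q(X = 1). Suppose every proper subset of X belongs to C, let p*_C be a maximum-entropy distribution consistent with D for C, and let p*_{C∪{X}} be a maximum-entropy distribution consistent with D for C ∪ {X}. Then p*_C(X = 1) = fr(X|D), hence p*_{C∪{X}} = p*_C, and consequently, if |D| ≥ 2, BIC(C∪{X}, D) > BIC(C, D). -/
open scoped BigOperators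

/-- BIC score of a collection `C` w.r.t. dataset `D`, where `p` is the
maximum-entropy distribution for `C` consistent with `D`. -/
noncomputable def bic {N : ℕ} (p : Transaction N → ℝ) (C : Finset (Finset (Fin N)))
    (D : Multiset (Transaction N)) : ℝ :=
  - Real.logb 2 (lhd p D) + ((C.card : ℝ) / 2) * Real.logb 2 (Multiset.card D : ℝ)

private lemma entropy_eq' {N : ℕ} (p : Transaction N → ℝ) :
    entropy p = (∑ t, Real.negMulLog (p t)) / Real.log 2 := by
  simp only [entropy, Real.negMulLog, Real.logb, Finset.sum_div]
  rw [← Finset.sum_neg_distrib]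
  congr 1; ext t; ring

private lemma probOne_half {N : ℕ} (p q : Transaction N → ℝ) (W : Finset (Fin N)) :
    probOne (fun t => (p t + q t) / 2) W = (probOne p W + probOne q W) / 2 := by
  rw [probOne, probOne, probOne, ← Finset.sum_add_distrib, Finset.sum_div]
  refine Finset.sum_congr rfl fun t _ => ?_
  by_cases h : supports W t <;> simp [h]

/-- Corollary 4.9: derivable itemsets, all of whose proper subsets are in `C`,
are redundant. -/
theorem derivable_itemset_redundant {N : ℕ} (hN : 1 ≤ N)
    (C : Finset (Finset (Fin N)))
    (D : Multiset (Transaction N)) (hD : D ≠ 0)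
    (X : Finset (Fin N)) (hXC : X ∉ C)
    -- `X` is derivable: its probability is determined by those of its proper subsets:
    (hder : ∀ p q : Transaction N → ℝ, IsDistr p → IsDistr q →
      (∀ W, W ⊂ X → probOne p W = probOne q W) → probOne p X = probOne q X)
    -- every proper subset of `X` belongs to `C`:
    (hsub : ∀ W, W ⊂ X → W ∈ C)
    -- `p*_C` is a maximum-entropy distribution consistent with `D` for `C`:
    (pstar : Transaction N → ℝ) (hpstar : IsDistr pstar)
    (hcons : ∀ W ∈ C, probOne pstar W = freq W D)
    (hmax : ∀ q : Transaction N → ℝ, IsDistr q → (∀ W ∈ C, probOne q W = freq W D) →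
      entropy q ≤ entropy pstar)
    -- `p*_{C ∪ {X}}` is a maximum-entropy distribution consistent with `D` for `C ∪ {X}`:
    (pstar' : Transaction N → ℝ) (hpstar' : IsDistr pstar')
    (hcons' : ∀ W ∈ insert X C, probOne pstar' W = freq W D)
    (hmax' : ∀ q : Transaction N → ℝ, IsDistr q →
      (∀ W ∈ insert X C, probOne q W = freq W D) → entropy q ≤ entropy pstar') :
    probOne pstar X = freq X D ∧ pstar' = pstar ∧
      (2 ≤ Multiset.card D → bic pstar C D < bic pstar' (insert X C) D) := by
  have hfreqX : probOne pstar X = freq X D := by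
    have h2 : probOne pstar X = probOne pstar' X :=
      hder pstar pstar' hpstar hpstar' (fun W hW => by
        rw [hcons W (hsub W hW), hcons' W (Finset.mem_insert_of_mem (hsub W hW))])
    rw [h2, hcons' X (Finset.mem_insert_self X C)]
  have hconsP : ∀ W ∈ insert X C, probOne pstar W = freq W D := by
    intro W hW
    rcases Finset.mem_insert.mp hW with rfl | hW
    · exact hfreqX
    · exact hcons W hW
  have hEnt : entropy pstar' = entropy pstar :=
    le_antisymm (hmax pstar' hpstar' (fun W hW => hcons' W (Finset.mem_insert_of_mem hW)))
      (hmax' pstar hpstar hconsP)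
  have heq : pstar' = pstar := by
    by_contra hne
    obtain ⟨t0, ht0⟩ : ∃ t, pstar t ≠ pstar' t := by
      by_contra h; push_neg at h; exact hne (funext fun t => (h t).symm)
    set m : Transaction N → ℝ := fun t => (pstar t + pstar' t) / 2 with hm
    have hmd : IsDistr m := by
      constructor
      · intro t
        obtain ⟨h1, h2⟩ := hpstar.1 t
        obtain ⟨h3, h4⟩ := hpstar'.1 t
        constructor
        · simp only [hm]; linarith
        · simp only [hm]; linarith
      · simp only [hm, ← Finset.sum_div, Finset.sum_add_distrib, hpstar.2, hpstar'.2]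
        norm_num
    have hmc : ∀ W ∈ C, probOne m W = freq W D := by
      intro W hW
      rw [hm, probOne_half, hcons W hW, hcons' W (Finset.mem_insert_of_mem hW)]
      ring
    have hml : entropy m ≤ entropy pstar := hmax m hmd hmc
    -- strict concavity gives a contradiction
    have hterm : ∀ t, (1/2 : ℝ) * Real.negMulLog (pstar t) +
        (1/2 : ℝ) * Real.negMulLog (pstar' t) ≤ Real.negMulLog (m t) := by
      intro t
      have := Real.concaveOn_negMulLog.2 (Set.mem_Ici.mpr (hpstar.1 t).1)
        (Set.mem_Ici.mpr (hpstar'.1 t).1) (by norm_num : (0:ℝ) ≤ 1/2)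
        (by norm_num : (0:ℝ) ≤ 1/2) (by norm_num : (1/2 : ℝ) + 1/2 = 1)
      rw [show m t = (1/2:ℝ) • pstar t + (1/2:ℝ) • pstar' t from by
        simp only [hm, smul_eq_mul]; ring]
      simpa using this
    have hstrict : (1/2 : ℝ) * Real.negMulLog (pstar t0) +
        (1/2 : ℝ) * Real.negMulLog (pstar' t0) < Real.negMulLog (m t0) := by
      have := Real.strictConcaveOn_negMulLog.2 (Set.mem_Ici.mpr (hpstar.1 t0).1)
        (Set.mem_Ici.mpr (hpstar'.1 t0).1) ht0 (by norm_num : (0:ℝ) < 1/2)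
        (by norm_num : (0:ℝ) < 1/2) (by norm_num : (1/2 : ℝ) + 1/2 = 1)
      rw [show m t0 = (1/2:ℝ) • pstar t0 + (1/2:ℝ) • pstar' t0 from by
        simp only [hm, smul_eq_mul]; ring]
      simpa using this
    have hsumlt : ∑ t, ((1/2 : ℝ) * Real.negMulLog (pstar t) +
        (1/2 : ℝ) * Real.negMulLog (pstar' t)) < ∑ t, Real.negMulLog (m t) :=
      Finset.sum_lt_sum (fun t _ => hterm t) ⟨t0, Finset.mem_univ t0, hstrict⟩
    have hlog2 : (0 : ℝ) < Real.log 2 := Real.log_pos one_lt_two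
    have hS : ∑ t, Real.negMulLog (pstar' t) = ∑ t, Real.negMulLog (pstar t) := by
      have h := hEnt
      rw [entropy_eq', entropy_eq'] at h
      field_simp at h
      exact h
    have hsum2 : ∑ t, ((1/2 : ℝ) * Real.negMulLog (pstar t) +
        (1/2 : ℝ) * Real.negMulLog (pstar' t)) = ∑ t, Real.negMulLog (pstar t) := by
      rw [Finset.sum_add_distrib, ← Finset.mul_sum, ← Finset.mul_sum, hS]; ring
    have hentm : entropy pstar < entropy m := by
      rw [entropy_eq', entropy_eq']
      rw [div_lt_div_iff_of_pos_right hlog2]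
      linarith [hsumlt]
    exact absurd hml (not_le.mpr hentm)
  refine ⟨hfreqX, heq, fun hD2 => ?_⟩
  have hL : 0 < Real.logb 2 (Multiset.card D : ℝ) := by
    apply Real.logb_pos one_lt_two
    exact_mod_cast lt_of_lt_of_le one_lt_two hD2
  have hcard : ((insert X C).card : ℝ) = (C.card : ℝ) + 1 := by
    rw [Finset.card_insert_of_notMem hXC]; push_cast; ring
  rw [heq]
  simp only [bic, hcard]
  nlinarith [hL]
end
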